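/- arXiv:cs/0508119 — 2 statements merged into one kernel-verified Lean document; each statement's English description precedes it below -/
import Mathlib

section
/- Let (Ȳ,Z̄,V) be random variables over finite alphabets with joint pmf p'(ȳ,v)·∏_{m=1}^{M'} q'_m(z_m|y_m), assume the positivity condition that I(Z̄_A;Z̄_B|Z̄_C,V) > 0 for all disjoint nonempty A, B ⊆ {1,…,M'} and every C ⊆ {1,…,M'}\(A∪B), and let B* be the set of R' ∈ ℝ^{M'} with I(Ȳ_I;Z̄_I|Z̄_{I^c},V) ≤ Σ_{i∈I} R'_i for every nonempty I ⊆ {1,…,M'}. Then the set of points R' ∈ B* at which at least M' of the 2^{M'}−1 defining constraints hold with equality has at most M'! elements. -/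
open Finset
open scoped Classical

noncomputable section

/-- The distribution (pmf) of the random variable `X` under the pmf `P` on the finite
sample space `Ω`. -/
def dist {Ω α : Type*} [Fintype Ω] [Fintype α] (P : Ω → ℝ) (X : Ω → α) (a : α) : ℝ :=
  ∑ ω, if X ω = a then P ω else 0

/-- Shannon entropy (base 2) of the random variable `X` under the pmf `P`. -/
def Hent {Ω α : Type*} [Fintype Ω] [Fintype α] (P : Ω → ℝ) (X : Ω → α) : ℝ :=
  -∑ a, dist P X a * Real.logb 2 (dist P X a)

/-- Conditional entropy `H(X | Y)`. -/
def condEnt {Ω α β : Type*} [Fintype Ω] [Fintype α] [Fintype β]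
    (P : Ω → ℝ) (X : Ω → α) (Y : Ω → β) : ℝ :=
  Hent P (fun ω => (X ω, Y ω)) - Hent P Y

/-- Conditional mutual information `I(X ; Y | Z)`. -/
def condMI {Ω α β γ : Type*} [Fintype Ω] [Fintype α] [Fintype β] [Fintype γ]
    (P : Ω → ℝ) (X : Ω → α) (Y : Ω → β) (Z : Ω → γ) : ℝ :=
  Hent P (fun ω => (X ω, Z ω)) + Hent P (fun ω => (Y ω, Z ω))
    - Hent P (fun ω => (X ω, Y ω, Z ω)) - Hent P Z

/-- The ε-strongly typical set condition for a sequence `xs` with respect to pmf `p`: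
`|N(a|xs)/n − p(a)| < ε/|α|` for every letter `a`. -/
def StronglyTypical {α : Type*} [Fintype α] (p : α → ℝ) {n : ℕ} (xs : Fin n → α)
    (ε : ℝ) : Prop :=
  ∀ a : α, |((Finset.univ.filter fun k => xs k = a).card : ℝ) / n - p a|
    < ε / Fintype.card α

section YZV

variable {M' : ℕ}

/-- Canonical sample space for `(Ȳ, Z̄, V)`. -/
abbrev Samp (𝒴 𝒵 : Fin M' → Type*) (V : Type*) : Type _ :=
  (∀ i, 𝒴 i) × (∀ i, 𝒵 i) × V

variable {𝒴 𝒵 : Fin M' → Type*} [∀ i, Fintype (𝒴 i)] [∀ i, Fintype (𝒵 i)]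
  {V : Type*} [Fintype V]

/-- The joint pmf `p'(ȳ,v) · ∏ₘ q'ₘ(zₘ | yₘ)` on the canonical sample space: conditionally
on `(Ȳ,V)` the `Zₘ` are mutually independent and `Zₘ` depends only on `Yₘ`. -/
def Pjoint (p' : (∀ i, 𝒴 i) × V → ℝ) (q : ∀ m, 𝒴 m → 𝒵 m → ℝ) :
    Samp 𝒴 𝒵 V → ℝ :=
  fun ω => p' (ω.1, ω.2.2) * ∏ m, q m (ω.1 m) (ω.2.1 m)

/-- `Ȳ_I`. -/
def Ybar (I : Finset (Fin M')) : Samp 𝒴 𝒵 V → (∀ i : I, 𝒴 i.1) := fun ω i => ω.1 i.1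

/-- `Z̄_I`. -/
def Zbar (I : Finset (Fin M')) : Samp 𝒴 𝒵 V → (∀ i : I, 𝒵 i.1) := fun ω i => ω.2.1 i.1

/-- The pair `(Z̄_I, V)` used as a conditioning variable. -/
def ZbarV (I : Finset (Fin M')) : Samp 𝒴 𝒵 V → (∀ i : I, 𝒵 i.1) × V :=
  fun ω => (fun i => ω.2.1 i.1, ω.2.2)

/-- Membership in the region `B*`: `I(Ȳ_I; Z̄_I | Z̄_{Iᶜ}, V) ≤ Σ_{i∈I} R_i` for every
nonempty `I ⊆ {1,…,M'}`. -/
def memBstar (p' : (∀ i, 𝒴 i) × V → ℝ) (q : ∀ m, 𝒴 m → 𝒵 m → ℝ)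
    (R : Fin M' → ℝ) : Prop :=
  ∀ I : Finset (Fin M'), I.Nonempty →
    condMI (Pjoint p' q) (Ybar I) (Zbar I) (ZbarV Iᶜ) ≤ ∑ i ∈ I, R i

end YZV

section AuxForStatement11
section General
variable {Ω α β γ : Type*} [Fintype Ω] [Fintype α] [Fintype β] [Fintype γ]

lemma dist_nonneg' (P : Ω → ℝ) (hP : ∀ ω, 0 ≤ P ω) (X : Ω → α) (a : α) :
    0 ≤ _root_.dist P X a :=
  Finset.sum_nonneg fun ω _ => by by_cases h : X ω = a <;> simp [h, hP ω]

lemma dist_expect (P : Ω → ℝ) (X : Ω → α) (u : α → ℝ) :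
    ∑ a, _root_.dist P X a * u a = ∑ ω, P ω * u (X ω) := by
  unfold _root_.dist
  simp_rw [Finset.sum_mul, ite_mul, zero_mul]
  rw [Finset.sum_comm]
  refine Finset.sum_congr rfl fun ω _ => ?_
  simp

lemma Hent_comp_inj (P : Ω → ℝ) (X : Ω → α) (g : α → β) (hg : Function.Injective g) :
    Hent P (fun ω => g (X ω)) = Hent P X := by
  have hd : ∀ a, _root_.dist P (fun ω => g (X ω)) (g a) = _root_.dist P X a := by
    intro a
    exact Finset.sum_congr rfl fun ω _ => by simp [hg.eq_iff]
  unfold Hent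
  congr 1
  rw [← Finset.sum_subset (Finset.subset_univ (Finset.univ.image g))]
  · rw [Finset.sum_image (fun x _ y _ h => hg h)]
    exact Finset.sum_congr rfl fun a _ => by rw [hd]
  · intro b _ hb
    have h0 : _root_.dist P (fun ω => g (X ω)) b = 0 := by
      refine Finset.sum_eq_zero fun ω _ => ?_
      rw [if_neg]
      intro h
      exact hb (Finset.mem_image.mpr ⟨X ω, Finset.mem_univ _, h⟩)
    rw [h0]; simp

lemma mul_mul_logb (x y : ℝ) (hx : 0 ≤ x) (hy : 0 ≤ y) :
    x * y * Real.logb 2 (x * y)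
      = y * (x * Real.logb 2 x) + x * (y * Real.logb 2 y) := by
  rcases eq_or_lt_of_le hx with h | h
  · simp [← h]
  rcases eq_or_lt_of_le hy with h' | h'
  · simp [← h']
  rw [Real.logb_mul h.ne' h'.ne']
  ring


lemma sum_prod_pi {ι : Type*} [Fintype ι] [DecidableEq ι] (Z : ι → Type*) [∀ i, Fintype (Z i)]
    (f : ∀ i, Z i → ℝ) :
    ∑ z : ∀ i, Z i, ∏ i, f i (z i) = ∏ i, ∑ zi, f i zi := by
  rw [Finset.prod_univ_sum, Fintype.piFinset_univ]

lemma prod_logb_eq {ι : Type*} [Fintype ι] [DecidableEq ι] (x : ι → ℝ) :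
    (∏ i, x i) * Real.logb 2 (∏ i, x i)
      = ∑ j, (∏ i ∈ Finset.univ.erase j, x i) * (x j * Real.logb 2 (x j)) := by
  by_cases h : ∀ i, x i ≠ 0
  · rw [Real.logb_prod _ _ fun i _ => h i, Finset.mul_sum]
    refine Finset.sum_congr rfl fun j _ => ?_
    rw [← Finset.mul_prod_erase Finset.univ x (Finset.mem_univ j)]
    ring
  · push_neg at h
    obtain ⟨j0, hj0⟩ := h
    have hp : ∏ i, x i = 0 := Finset.prod_eq_zero (Finset.mem_univ j0) hj0
    rw [hp, eq_comm]
    refine (Finset.sum_eq_zero fun j _ => ?_).trans (by simp)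
    by_cases hj : j = j0
    · subst hj; rw [hj0]; simp
    · rw [Finset.prod_eq_zero (Finset.mem_erase.mpr ⟨Ne.symm hj, Finset.mem_univ _⟩) hj0]
      simp

/-- auxiliary family for the product-entropy computation -/
def Gaux {ι : Type*} (Z : ι → Type*) [DecidableEq ι] (F : ∀ i, Z i → ℝ) (j : ι) (i : ι)
    (zi : Z i) : ℝ :=
  if i = j then F i zi * Real.logb 2 (F i zi) else F i zi

lemma negSum_prod_logb {ι : Type*} [Fintype ι] [DecidableEq ι] (Z : ι → Type*) [∀ i, Fintype (Z i)]
    (F : ∀ i, Z i → ℝ) (h1 : ∀ i, ∑ z, F i z = 1) :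
    -∑ z : ∀ i, Z i, (∏ i, F i (z i)) * Real.logb 2 (∏ i, F i (z i))
      = ∑ i, -∑ zi, F i zi * Real.logb 2 (F i zi) := by
  have key : ∀ z : ∀ i, Z i, (∏ i, F i (z i)) * Real.logb 2 (∏ i, F i (z i))
      = ∑ j, ∏ i, Gaux Z F j i (z i) := by
    intro z
    rw [prod_logb_eq (fun i => F i (z i))]
    refine Finset.sum_congr rfl fun j _ => ?_
    rw [← Finset.mul_prod_erase Finset.univ (fun i => Gaux Z F j i (z i)) (Finset.mem_univ j)]
    unfold Gaux
    rw [if_pos rfl, mul_comm]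
    congr 1
    exact Finset.prod_congr rfl fun i hi => by rw [if_neg (Finset.mem_erase.mp hi).1]
  have step2 : ∀ j, (∑ z : ∀ i, Z i, ∏ i, Gaux Z F j i (z i))
      = ∑ zi, F j zi * Real.logb 2 (F j zi) := by
    intro j
    rw [sum_prod_pi Z (Gaux Z F j)]
    have hsum : ∀ i, (∑ zi, Gaux Z F j i zi)
        = if i = j then ∑ zi, F i zi * Real.logb 2 (F i zi) else 1 := by
      intro i
      unfold Gaux
      by_cases hij : i = j <;> simp [hij, h1]
    rw [Finset.prod_congr rfl fun i _ => hsum i, Finset.prod_ite_eq' Finset.univ j,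
      if_pos (Finset.mem_univ j)]
  rw [Finset.sum_congr rfl fun z _ => key z, Finset.sum_comm,
    Finset.sum_congr rfl fun j (_ : j ∈ Finset.univ) => step2 j]
  rw [Finset.sum_neg_distrib]

lemma Hent_pair_kernel (P : Ω → ℝ) (hP0 : ∀ ω, 0 ≤ P ω)
    (X : Ω → α) (Z : Ω → β) (k : γ → β → ℝ) (f : α → γ)
    (hk0 : ∀ c b, 0 ≤ k c b) (hk1 : ∀ c, ∑ b, k c b = 1)
    (hfact : ∀ a b, _root_.dist P (fun ω => (X ω, Z ω)) (a, b)
      = _root_.dist P X a * k (f a) b) :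
    Hent P (fun ω => (X ω, Z ω)) =
      Hent P X + ∑ a, _root_.dist P X a *
        (-∑ b, k (f a) b * Real.logb 2 (k (f a) b)) := by
  unfold Hent
  rw [Fintype.sum_prod_type]
  have hterm : ∀ a b,
      _root_.dist P (fun ω => (X ω, Z ω)) (a, b)
        * Real.logb 2 (_root_.dist P (fun ω => (X ω, Z ω)) (a, b))
      = k (f a) b * (_root_.dist P X a * Real.logb 2 (_root_.dist P X a))
        + _root_.dist P X a * (k (f a) b * Real.logb 2 (k (f a) b)) := by
    intro a b
    rw [hfact a b]
    exact mul_mul_logb _ _ (dist_nonneg' P hP0 X a) (hk0 _ _)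
  have hrow : ∀ a, (∑ b, _root_.dist P (fun ω => (X ω, Z ω)) (a, b)
        * Real.logb 2 (_root_.dist P (fun ω => (X ω, Z ω)) (a, b)))
      = _root_.dist P X a * Real.logb 2 (_root_.dist P X a)
        + _root_.dist P X a * ∑ b, k (f a) b * Real.logb 2 (k (f a) b) := by
    intro a
    rw [Finset.sum_congr rfl fun b _ => hterm a b, Finset.sum_add_distrib,
      ← Finset.sum_mul, ← Finset.mul_sum, hk1, one_mul]
  rw [Finset.sum_congr rfl fun a (_ : a ∈ Finset.univ) => hrow a, Finset.sum_add_distrib]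
  simp only [mul_neg, Finset.sum_neg_distrib, neg_add]


end General

section Glue
variable {n : ℕ}

/-- Glue a function on `I` and a function on `Iᶜ` into a function on all of `Fin n`. -/
def glue (I : Finset (Fin n)) {Z : Fin n → Type*}
    (zI : ∀ i : I, Z i) (zc : ∀ i : ↥Iᶜ, Z i) (i : Fin n) : Z i :=
  if h : i ∈ I then zI ⟨i, h⟩ else zc ⟨i, Finset.mem_compl.mpr h⟩

lemma glue_left (I : Finset (Fin n)) {Z : Fin n → Type*}
    (zI : ∀ i : I, Z i) (zc : ∀ i : ↥Iᶜ, Z i) :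
    (fun i : I => glue I zI zc i.1) = zI := by
  funext i
  simp only [glue, dif_pos i.2]

lemma glue_right (I : Finset (Fin n)) {Z : Fin n → Type*}
    (zI : ∀ i : I, Z i) (zc : ∀ i : ↥Iᶜ, Z i) :
    (fun i : ↥Iᶜ => glue I zI zc i.1) = zc := by
  funext i
  have h : i.1 ∉ I := Finset.mem_compl.mp i.2
  simp only [glue, dif_neg h]

/-- Splitting a sum over a pi type along a finset `I`. -/
lemma sum_pi_split (I : Finset (Fin n)) {Z : Fin n → Type*} [∀ i, Fintype (Z i)]
    (g : (∀ i, Z i) → ℝ) :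
    ∑ z : ∀ i, Z i, g z = ∑ zI : ∀ i : I, Z i, ∑ zc : ∀ i : ↥Iᶜ, Z i, g (glue I zI zc) := by
  refine Eq.trans ?_ (Fintype.sum_prod_type
    (fun p : (∀ i : I, Z i) × (∀ i : ↥Iᶜ, Z i) => g (glue I p.1 p.2)))
  refine (Fintype.sum_bijective (fun p : (∀ i : I, Z i) × (∀ i : ↥Iᶜ, Z i) => glue I p.1 p.2)
    ?_ _ _ fun p => rfl).symm
  · constructor
    · intro p p' h
      ext i
      · have := congrFun h i.1
        simpa only [glue, dif_pos i.2] using this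
      · have hi : i.1 ∉ I := Finset.mem_compl.mp i.2
        have := congrFun h i.1
        simpa only [glue, dif_neg hi] using this
    · intro z
      refine ⟨(fun i : I => z i.1, fun i : ↥Iᶜ => z i.1), ?_⟩
      funext i
      by_cases h : i ∈ I <;> simp [glue, h]

lemma prod_glue (I : Finset (Fin n)) {Z : Fin n → Type*} [∀ i, Fintype (Z i)]
    (zI : ∀ i : I, Z i) (zc : ∀ i : ↥Iᶜ, Z i) (W : ∀ m, Z m → ℝ) :
    ∏ m, W m (glue I zI zc m)
      = (∏ i : I, W i.1 (zI i)) * ∏ i : ↥Iᶜ, W i.1 (zc i) := by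
  rw [← Finset.prod_mul_prod_compl I (fun m => W m (glue I zI zc m))]
  congr 1
  · rw [← Finset.prod_attach I (fun m => W m (glue I zI zc m))]
    refine Finset.prod_congr rfl fun i _ => ?_
    congr 1
    simp only [glue, dif_pos i.2]
  · rw [← Finset.prod_attach Iᶜ (fun m => W m (glue I zI zc m))]
    refine Finset.prod_congr rfl fun i _ => ?_
    congr 1
    have h : i.1 ∉ I := Finset.mem_compl.mp i.2
    simp only [glue, dif_neg h]

end Glue

section Main
variable {M' : ℕ} {𝒴 𝒵 : Fin M' → Type*} [∀ i, Fintype (𝒴 i)] [∀ i, Fintype (𝒵 i)]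
  {V : Type*} [Fintype V]

/-- The marginal pmf of `(Ȳ_I, Z̄_{Iᶜ}, V)` in explicit form. -/
def Dfun (p' : (∀ i, 𝒴 i) × V → ℝ) (q : ∀ m, 𝒴 m → 𝒵 m → ℝ) (I : Finset (Fin M'))
    (y : ∀ i : I, 𝒴 i.1) (zc : ∀ i : ↥Iᶜ, 𝒵 i.1) (v : V) : ℝ :=
  ∑ yb : ∀ i, 𝒴 i, if (fun i : I => yb i.1) = y then
    p' (yb, v) * ∏ i : ↥Iᶜ, q i.1 (yb i.1) (zc i) else 0

variable (p' : (∀ i, 𝒴 i) × V → ℝ) (q : ∀ m, 𝒴 m → 𝒵 m → ℝ)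

lemma Ybar_def (I : Finset (Fin M')) (ω : Samp 𝒴 𝒵 V) :
    Ybar I ω = fun i : I => ω.1 i.1 := rfl

lemma Zbar_def (I : Finset (Fin M')) (ω : Samp 𝒴 𝒵 V) :
    Zbar I ω = fun i : I => ω.2.1 i.1 := rfl

lemma ZbarV_def (I : Finset (Fin M')) (ω : Samp 𝒴 𝒵 V) :
    ZbarV I ω = (fun i : I => ω.2.1 i.1, ω.2.2) := rfl

lemma distB (I : Finset (Fin M'))
    (y : ∀ i : I, 𝒴 i.1) (zc : ∀ i : ↥Iᶜ, 𝒵 i.1) (v : V) (z : ∀ i : I, 𝒵 i.1) :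
    _root_.dist (Pjoint p' q) (fun ω => ((Ybar I ω, ZbarV Iᶜ ω), Zbar I ω)) ((y, (zc, v)), z)
      = Dfun p' q I y zc v * ∏ i : I, q i.1 (y i) (z i) := by
  simp only [_root_.dist, Pjoint, Ybar_def, Zbar_def, ZbarV_def, Dfun]
  rw [Fintype.sum_prod_type, Finset.sum_mul]
  refine Finset.sum_congr rfl fun yb _ => ?_
  rw [Fintype.sum_prod_type]
  simp only [Prod.mk.injEq, ite_and, Finset.sum_ite_irrel, Finset.sum_ite_eq',
    Finset.mem_univ, if_true, Finset.sum_const_zero]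
  rw [sum_pi_split I (Z := fun i => 𝒵 i)]
  simp only [glue_left, glue_right, Finset.sum_ite_irrel, Finset.sum_ite_eq',
    Finset.mem_univ, if_true, Finset.sum_const_zero]
  by_cases hA : (fun i : I => yb i.1) = y
  · rw [if_pos hA, if_pos hA]
    rw [prod_glue I z zc (fun m zm => q m (yb m) zm)]
    have : (∏ i : I, q i.1 (yb i.1) (z i)) = ∏ i : I, q i.1 (y i) (z i) :=
      Finset.prod_congr rfl fun i _ => by rw [congrFun hA i]
    rw [this]
    ring
  · rw [if_neg hA, if_neg hA, zero_mul]

lemma distA (hq1 : ∀ m y, ∑ z, q m y z = 1) (I : Finset (Fin M'))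
    (y : ∀ i : I, 𝒴 i.1) (zc : ∀ i : ↥Iᶜ, 𝒵 i.1) (v : V) :
    _root_.dist (Pjoint p' q) (fun ω => (Ybar I ω, ZbarV Iᶜ ω)) (y, (zc, v))
      = Dfun p' q I y zc v := by
  simp only [_root_.dist, Pjoint, Ybar_def, ZbarV_def, Dfun]
  rw [Fintype.sum_prod_type]
  refine Finset.sum_congr rfl fun yb _ => ?_
  rw [Fintype.sum_prod_type]
  simp only [Prod.mk.injEq, ite_and, Finset.sum_ite_irrel, Finset.sum_ite_eq',
    Finset.mem_univ, if_true, Finset.sum_const_zero]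
  rw [sum_pi_split I (Z := fun i => 𝒵 i)]
  simp only [glue_left, glue_right, Finset.sum_ite_irrel, Finset.sum_ite_eq',
    Finset.mem_univ, if_true, Finset.sum_const_zero]
  by_cases hA : (fun i : I => yb i.1) = y
  · rw [if_pos hA, if_pos hA]
    have hpg : ∀ zI : ∀ i : I, 𝒵 i.1,
        (∏ m, q m (yb m) (glue I zI zc m))
          = (∏ i : I, q i.1 (yb i.1) (zI i)) * ∏ i : ↥Iᶜ, q i.1 (yb i.1) (zc i) :=
      fun zI => prod_glue I zI zc (fun m zm => q m (yb m) zm)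
    calc ∑ zI : ∀ i : I, 𝒵 i.1, p' (yb, v) * ∏ m, q m (yb m) (glue I zI zc m)
        = ∑ zI : ∀ i : I, 𝒵 i.1, (p' (yb, v) * ∏ i : ↥Iᶜ, q i.1 (yb i.1) (zc i))
            * ∏ i : I, q i.1 (yb i.1) (zI i) := by
          refine Finset.sum_congr rfl fun zI _ => ?_
          rw [hpg zI]; ring
      _ = (p' (yb, v) * ∏ i : ↥Iᶜ, q i.1 (yb i.1) (zc i))
            * ∑ zI : ∀ i : I, 𝒵 i.1, ∏ i : I, q i.1 (yb i.1) (zI i) := by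
          rw [Finset.mul_sum]
      _ = p' (yb, v) * ∏ i : ↥Iᶜ, q i.1 (yb i.1) (zc i) := by
          rw [sum_prod_pi (fun i : I => 𝒵 i.1) (fun i zi => q i.1 (yb i.1) zi)]
          simp [hq1]
  · rw [if_neg hA, if_neg hA]


lemma Pjoint_nonneg (hp'0 : ∀ yv, 0 ≤ p' yv) (hq0 : ∀ m y z, 0 ≤ q m y z) :
    ∀ ω, 0 ≤ Pjoint p' q ω :=
  fun ω => mul_nonneg (hp'0 _) (Finset.prod_nonneg fun m _ => hq0 m _ _)

set_option maxHeartbeats 1600000 in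
lemma Hent_pairAC (A C : Finset (Fin M')) :
    Hent (Pjoint p' q) (fun ω => (Zbar A ω, ZbarV C ω))
      = Hent (Pjoint p' q) (ZbarV (A ∪ C)) := by
  have hg : Function.Injective
      (fun p : (∀ i : ↑(A ∪ C), 𝒵 i.1) × V =>
        ((fun i : A => p.1 ⟨i.1, Finset.mem_union_left C i.2⟩),
         ((fun i : C => p.1 ⟨i.1, Finset.mem_union_right A i.2⟩), p.2))) := by
    intro u w h
    simp only [Prod.mk.injEq] at h
    obtain ⟨h1, h2, h3⟩ := h
    refine Prod.ext ?_ h3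
    funext i
    rcases Finset.mem_union.mp i.2 with hi | hi
    · exact congrFun h1 ⟨i.1, hi⟩
    · exact congrFun h2 ⟨i.1, hi⟩
  exact Hent_comp_inj (Pjoint p' q) (ZbarV (A ∪ C)) _ hg

set_option maxHeartbeats 1600000 in
lemma Hent_tripleABC (A B C : Finset (Fin M')) :
    Hent (Pjoint p' q) (fun ω => (Zbar A ω, Zbar B ω, ZbarV C ω))
      = Hent (Pjoint p' q) (ZbarV (A ∪ B ∪ C)) := by
  have hg : Function.Injective
      (fun p : (∀ i : ↑(A ∪ B ∪ C), 𝒵 i.1) × V =>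
        ((fun i : A => p.1 ⟨i.1, Finset.mem_union_left C (Finset.mem_union_left B i.2)⟩),
         ((fun i : B => p.1 ⟨i.1, Finset.mem_union_left C (Finset.mem_union_right A i.2)⟩),
          ((fun i : C => p.1 ⟨i.1, Finset.mem_union_right _ i.2⟩), p.2)))) := by
    intro u w h
    simp only [Prod.mk.injEq] at h
    obtain ⟨h1, h2, h3, h4⟩ := h
    refine Prod.ext ?_ h4
    funext i
    rcases Finset.mem_union.mp i.2 with hi | hi
    · rcases Finset.mem_union.mp hi with hi' | hi'
      · exact congrFun h1 ⟨i.1, hi'⟩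
      · exact congrFun h2 ⟨i.1, hi'⟩
    · exact congrFun h3 ⟨i.1, hi⟩
  exact Hent_comp_inj (Pjoint p' q) (ZbarV (A ∪ B ∪ C)) _ hg

set_option maxHeartbeats 1600000 in
lemma Hent_tripleYZ (I : Finset (Fin M')) :
    Hent (Pjoint p' q) (fun ω => (Ybar I ω, Zbar I ω, ZbarV Iᶜ ω))
      = Hent (Pjoint p' q) (fun ω => ((Ybar I ω, ZbarV Iᶜ ω), Zbar I ω)) := by
  have hg : Function.Injective
      (fun p : ((∀ i : I, 𝒴 i.1) × ((∀ i : ↥Iᶜ, 𝒵 i.1) × V)) × (∀ i : I, 𝒵 i.1) =>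
        (p.1.1, (p.2, p.1.2))) := by
    intro u w h
    simp only [Prod.mk.injEq] at h
    exact Prod.ext (Prod.ext h.1 h.2.2) h.2.1
  exact Hent_comp_inj (Pjoint p' q)
    (fun ω => ((Ybar I ω, ZbarV Iᶜ ω), Zbar I ω)) _ hg

/-- The per-coordinate conditional entropy `H(Z_i | Y_i)` (times the marginal). -/
def hM (i : Fin M') : ℝ :=
  ∑ ω : Samp 𝒴 𝒵 V, Pjoint p' q ω *
    (-∑ zi, q i (ω.1 i) zi * Real.logb 2 (q i (ω.1 i) zi))

set_option maxHeartbeats 1600000 in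
lemma Hent_bprime (hp'0 : ∀ yv, 0 ≤ p' yv) (hq0 : ∀ m y z, 0 ≤ q m y z)
    (hq1 : ∀ m y, ∑ z, q m y z = 1) (I : Finset (Fin M')) :
    Hent (Pjoint p' q) (fun ω => ((Ybar I ω, ZbarV Iᶜ ω), Zbar I ω))
      = Hent (Pjoint p' q) (fun ω => (Ybar I ω, ZbarV Iᶜ ω)) + ∑ i ∈ I, hM p' q i := by
  have hrw := Hent_pair_kernel (Pjoint p' q) (Pjoint_nonneg p' q hp'0 hq0)
      (fun ω => (Ybar I ω, ZbarV Iᶜ ω)) (Zbar I)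
      (fun (y : ∀ i : I, 𝒴 i.1) (z : ∀ i : I, 𝒵 i.1) => ∏ i : I, q i.1 (y i) (z i))
      (fun a => a.1)
      (fun c b => Finset.prod_nonneg fun i _ => hq0 _ _ _)
      (fun c => by
        rw [sum_prod_pi (fun i : I => 𝒵 i.1) (fun i zi => q i.1 (c i) zi)]
        simp [hq1])
      (fun a b => by
        obtain ⟨y, zc, v⟩ := a
        rw [distB p' q I y zc v b, distA p' q hq1 I y zc v])
  rw [hrw]
  congr 1
  have hinner : ∀ a : (∀ i : I, 𝒴 i.1) × ((∀ i : ↥Iᶜ, 𝒵 i.1) × V),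
      (-∑ b : ∀ i : I, 𝒵 i.1, (∏ i : I, q i.1 (a.1 i) (b i))
          * Real.logb 2 (∏ i : I, q i.1 (a.1 i) (b i)))
        = ∑ i : I, -∑ zi, q i.1 (a.1 i) zi * Real.logb 2 (q i.1 (a.1 i) zi) :=
    fun a => negSum_prod_logb (fun i : I => 𝒵 i.1)
      (fun i zi => q i.1 (a.1 i) zi) (fun i => hq1 _ _)
  rw [Finset.sum_congr rfl fun a (_ : a ∈ Finset.univ) => by rw [hinner a]]
  rw [dist_expect (Pjoint p' q) (fun ω => (Ybar I ω, ZbarV Iᶜ ω))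
    (fun a => ∑ i : I, -∑ zi, q i.1 (a.1 i) zi * Real.logb 2 (q i.1 (a.1 i) zi))]
  rw [Finset.sum_congr rfl fun ω (_ : ω ∈ Finset.univ) => Finset.mul_sum ..]
  rw [Finset.sum_comm]
  rw [← Finset.sum_coe_sort I (fun i => hM p' q i)]
  refine Finset.sum_congr rfl fun i _ => ?_
  unfold hM
  exact Finset.sum_congr rfl fun ω _ => rfl

/-- The entropy of `(Z̄_S, V)`. -/
def eH (S : Finset (Fin M')) : ℝ := Hent (Pjoint p' q) (ZbarV S)

set_option maxHeartbeats 1600000 in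
/-- The key identity (★). -/
lemma star (hp'0 : ∀ yv, 0 ≤ p' yv) (hq0 : ∀ m y z, 0 ≤ q m y z)
    (hq1 : ∀ m y, ∑ z, q m y z = 1) (I : Finset (Fin M')) :
    condMI (Pjoint p' q) (Ybar I) (Zbar I) (ZbarV Iᶜ)
      = eH p' q Finset.univ - eH p' q Iᶜ - ∑ i ∈ I, hM p' q i := by
  unfold condMI
  have t2 : Hent (Pjoint p' q) (fun ω => (Zbar I ω, ZbarV Iᶜ ω))
      = eH p' q Finset.univ := by
    rw [Hent_pairAC p' q I Iᶜ, Finset.union_compl]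
    rfl
  rw [t2, Hent_tripleYZ p' q I, Hent_bprime p' q hp'0 hq0 hq1 I]
  unfold eH
  ring

set_option maxHeartbeats 1600000 in
lemma condMI_Z_eq (A B C : Finset (Fin M')) :
    condMI (Pjoint p' q) (Zbar A) (Zbar B) (ZbarV C)
      = eH p' q (A ∪ C) + eH p' q (B ∪ C) - eH p' q (A ∪ B ∪ C) - eH p' q C := by
  unfold condMI
  rw [Hent_pairAC p' q A C, Hent_pairAC p' q B C, Hent_tripleABC p' q A B C]
  rfl


/-- `I(Ȳ_I ; Z̄_I | Z̄_{Iᶜ}, V)`. -/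
def fF (I : Finset (Fin M')) : ℝ :=
  condMI (Pjoint p' q) (Ybar I) (Zbar I) (ZbarV Iᶜ)

end Main

end AuxForStatement11

/-- Lemma B.9 (le:num) of the paper: under the positivity condition, the set of points of
`B*` at which at least `M'` of the `2^{M'} − 1` defining constraints are active is finite
with at most `M'!` elements. -/
theorem statement_11 (M' : ℕ) (𝒴 𝒵 : Fin M' → Type) [∀ i, Fintype (𝒴 i)]
    [∀ i, Fintype (𝒵 i)] (V : Type) [Fintype V]
    (p' : (∀ i, 𝒴 i) × V → ℝ) (q : ∀ m, 𝒴 m → 𝒵 m → ℝ)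
    (hp'0 : ∀ yv, 0 ≤ p' yv) (hp'1 : ∑ yv, p' yv = 1)
    (hq0 : ∀ m y z, 0 ≤ q m y z) (hq1 : ∀ m y, ∑ z, q m y z = 1)
    (hpos : ∀ A B C : Finset (Fin M'), A.Nonempty → B.Nonempty → Disjoint A B →
      C ⊆ (A ∪ B)ᶜ → 0 < condMI (Pjoint p' q) (Zbar A) (Zbar B) (ZbarV C)) :
    {R : Fin M' → ℝ | memBstar p' q R ∧
        M' ≤ (Finset.univ.filter (fun I : Finset (Fin M') => I.Nonempty ∧
          condMI (Pjoint p' q) (Ybar I) (Zbar I) (ZbarV Iᶜ) = ∑ i ∈ I, R i)).card}.Finite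
      ∧
    {R : Fin M' → ℝ | memBstar p' q R ∧
        M' ≤ (Finset.univ.filter (fun I : Finset (Fin M') => I.Nonempty ∧
          condMI (Pjoint p' q) (Ybar I) (Zbar I) (ZbarV Iᶜ) = ∑ i ∈ I, R i)).card}.ncard
      ≤ Nat.factorial M' := by
  classical
  suffices h : ({R : Fin M' → ℝ | memBstar p' q R ∧
        M' ≤ (Finset.univ.filter (fun I : Finset (Fin M') => I.Nonempty ∧
          fF p' q I = ∑ i ∈ I, R i)).card}.Finite
      ∧
      {R : Fin M' → ℝ | memBstar p' q R ∧
        M' ≤ (Finset.univ.filter (fun I : Finset (Fin M') => I.Nonempty ∧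
          fF p' q I = ∑ i ∈ I, R i)).card}.ncard ≤ Nat.factorial M') by
    exact h
  have hstar : ∀ I : Finset (Fin M'),
      fF p' q I = eH p' q Finset.univ - eH p' q Iᶜ - ∑ i ∈ I, hM p' q i :=
    fun I => star p' q hp'0 hq0 hq1 I
  have hf0 : fF p' q ∅ = 0 := by
    rw [hstar]
    simp [Finset.compl_empty]
  have hsup : ∀ I J : Finset (Fin M'), ¬ I ⊆ J → ¬ J ⊆ I →
      fF p' q I + fF p' q J < fF p' q (I ∩ J) + fF p' q (I ∪ J) := by
    intro I J hIJ hJI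
    have hA : (I \ J).Nonempty := by rwa [Finset.sdiff_nonempty]
    have hB : (J \ I).Nonempty := by rwa [Finset.sdiff_nonempty]
    have hdisj : Disjoint (I \ J) (J \ I) := disjoint_sdiff_sdiff
    have hCsub : ((I ∪ J)ᶜ : Finset (Fin M')) ⊆ ((I \ J) ∪ (J \ I))ᶜ := by
      intro x hx
      simp only [Finset.mem_compl, Finset.mem_union, Finset.mem_sdiff] at hx ⊢
      tauto
    have hpos' := hpos (I \ J) (J \ I) (I ∪ J)ᶜ hA hB hdisj hCsub
    rw [condMI_Z_eq p' q] at hpos'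
    have e1 : (I \ J) ∪ (I ∪ J)ᶜ = Jᶜ := by
      ext x
      simp only [Finset.mem_union, Finset.mem_sdiff, Finset.mem_compl]
      tauto
    have e2 : (J \ I) ∪ (I ∪ J)ᶜ = Iᶜ := by
      ext x
      simp only [Finset.mem_union, Finset.mem_sdiff, Finset.mem_compl]
      tauto
    have e3 : (I \ J) ∪ (J \ I) ∪ (I ∪ J)ᶜ = (I ∩ J)ᶜ := by
      ext x
      simp only [Finset.mem_union, Finset.mem_sdiff, Finset.mem_compl, Finset.mem_inter]
      tauto
    rw [e1, e2, e3] at hpos'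
    have hsum : ∑ i ∈ I ∪ J, hM p' q i + ∑ i ∈ I ∩ J, hM p' q i
        = ∑ i ∈ I, hM p' q i + ∑ i ∈ J, hM p' q i := Finset.sum_union_inter
    rw [hstar I, hstar J, hstar (I ∩ J), hstar (I ∪ J)]
    linarith
  set Cc : Equiv.Perm (Fin M') → ℕ → Finset (Fin M') :=
    fun σ k => (Finset.univ.filter fun l : Fin M' => (l : ℕ) < k).image σ with hCc
  set F : Equiv.Perm (Fin M') → (Fin M' → ℝ) := fun σ i =>
    fF p' q (Cc σ ((σ.symm i : ℕ) + 1)) - fF p' q (Cc σ (σ.symm i)) with hF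
  have hrange : ∀ R : Fin M' → ℝ, memBstar p' q R →
      M' ≤ (Finset.univ.filter (fun I : Finset (Fin M') => I.Nonempty ∧
        fF p' q I = ∑ i ∈ I, R i)).card →
      ∃ σ : Equiv.Perm (Fin M'), F σ = R := by
    intro R hmem0 hcard
    have hmem : ∀ I : Finset (Fin M'), I.Nonempty → fF p' q I ≤ ∑ i ∈ I, R i := hmem0
    set T := Finset.univ.filter (fun I : Finset (Fin M') => I.Nonempty ∧
      fF p' q I = ∑ i ∈ I, R i) with hT
    have hmemT : ∀ I : Finset (Fin M'),
        I ∈ T ↔ I.Nonempty ∧ fF p' q I = ∑ i ∈ I, R i := by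
      intro I
      rw [hT, Finset.mem_filter]
      simp
    have hchain : ∀ I ∈ T, ∀ J ∈ T, I ⊆ J ∨ J ⊆ I := by
      intro I hI J hJ
      by_contra hcon
      push_neg at hcon
      obtain ⟨h1, h2⟩ := hcon
      have hIT := (hmemT I).mp hI
      have hJT := (hmemT J).mp hJ
      have hlt := hsup I J h1 h2
      have hle1 : fF p' q (I ∪ J) ≤ ∑ i ∈ I ∪ J, R i :=
        hmem (I ∪ J) (hIT.1.inl)
      have hle2 : fF p' q (I ∩ J) ≤ ∑ i ∈ I ∩ J, R i := by
        rcases Finset.eq_empty_or_nonempty (I ∩ J) with he | hne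
        · rw [he, hf0, Finset.sum_empty]
        · exact hmem _ hne
      have hui : ∑ i ∈ I ∪ J, R i + ∑ i ∈ I ∩ J, R i
          = ∑ i ∈ I, R i + ∑ i ∈ J, R i := Finset.sum_union_inter
      linarith [hIT.2, hJT.2]
    have hinj : Set.InjOn Finset.card (T : Set (Finset (Fin M'))) := by
      intro I hI J hJ hcardeq
      rcases hchain I hI J hJ with h | h
      · exact Finset.eq_of_subset_of_card_le h (le_of_eq hcardeq.symm)
      · exact (Finset.eq_of_subset_of_card_le h (le_of_eq hcardeq)).symm
    have hmaps : ∀ I ∈ T, I.card ∈ Finset.Icc 1 M' := by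
      intro I hI
      have h1 : 1 ≤ I.card := Finset.card_pos.mpr ((hmemT I).mp hI).1
      have h2 : I.card ≤ M' := by
        have := Finset.card_le_univ I
        simpa using this
      exact Finset.mem_Icc.mpr ⟨h1, h2⟩
    have hTle : T.card ≤ M' := by
      have := Finset.card_le_card_of_injOn Finset.card hmaps hinj
      simpa [Nat.card_Icc] using this
    have hTcard : T.card = M' := le_antisymm hTle hcard
    have himg : T.image Finset.card = Finset.Icc 1 M' := by
      refine Finset.eq_of_subset_of_card_le ?_ ?_
      · intro k hk
        obtain ⟨I, hI, hIk⟩ := Finset.mem_image.mp hk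
        exact hIk ▸ hmaps I hI
      · rw [Finset.card_image_of_injOn hinj, hTcard, Nat.card_Icc]
        omega
    have hex : ∀ k : ℕ, 1 ≤ k → k ≤ M' → ∃ I, I ∈ T ∧ I.card = k := by
      intro k h1 h2
      have : k ∈ T.image Finset.card := by
        rw [himg]; exact Finset.mem_Icc.mpr ⟨h1, h2⟩
      obtain ⟨I, hI, hIk⟩ := Finset.mem_image.mp this
      exact ⟨I, hI, hIk⟩
    choose SS0 hSS0 using hex
    obtain ⟨SS, hSS0eq, hSSmem, hSScard⟩ :
        ∃ SS : ℕ → Finset (Fin M'), SS 0 = ∅ ∧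
          (∀ k, 1 ≤ k → k ≤ M' → SS k ∈ T) ∧ (∀ k, k ≤ M' → (SS k).card = k) := by
      refine ⟨fun k => if h : 1 ≤ k ∧ k ≤ M' then SS0 k h.1 h.2 else ∅, ?_, ?_, ?_⟩
      · simp
      · intro k h1 h2
        simp only [dif_pos (And.intro h1 h2)]
        exact (hSS0 k h1 h2).1
      · intro k h2
        rcases Nat.eq_zero_or_pos k with h0 | h1
        · subst h0; simp
        · have h1' : 1 ≤ k := h1
          simp only [dif_pos (And.intro h1' h2)]
          exact (hSS0 k h1' h2).2
    have hmono : ∀ j k : ℕ, j ≤ k → k ≤ M' → SS j ⊆ SS k := by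
      intro j k hjk hk
      rcases Nat.eq_zero_or_pos j with h0 | h1
      · subst h0; rw [hSS0eq]; exact Finset.empty_subset _
      rcases eq_or_lt_of_le hjk with heq | hlt
      · subst heq; exact Finset.Subset.refl _
      rcases hchain (SS j) (hSSmem j h1 (by omega)) (SS k) (hSSmem k (by omega) hk) with h | h
      · exact h
      · exfalso
        have := Finset.card_le_card h
        rw [hSScard j (by omega), hSScard k hk] at this
        omega
    have hact : ∀ k : ℕ, k ≤ M' → fF p' q (SS k) = ∑ i ∈ SS k, R i := by
      intro k hk
      rcases Nat.eq_zero_or_pos k with h0 | h1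
      · subst h0; rw [hSS0eq, hf0, Finset.sum_empty]
      · exact ((hmemT _).mp (hSSmem k h1 hk)).2
    have hdiff : ∀ k : Fin M', ∃ a : Fin M', SS (k.1 + 1) \ SS k.1 = {a} := by
      intro k
      apply Finset.card_eq_one.mp
      rw [Finset.card_sdiff_of_subset (hmono k.1 (k.1 + 1) (by omega) k.2)]
      rw [hSScard (k.1 + 1) k.2, hSScard k.1 (le_of_lt (by omega))]
      omega
    choose σ0 hσ0 using hdiff
    have hmemS : ∀ k : Fin M', σ0 k ∈ SS (k.1 + 1) ∧ σ0 k ∉ SS k.1 := by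
      intro k
      have := Finset.mem_singleton_self (σ0 k)
      rw [← hσ0 k] at this
      exact Finset.mem_sdiff.mp this
    have hins : ∀ k : Fin M', SS (k.1 + 1) = insert (σ0 k) (SS k.1) := by
      intro k
      have h1 : SS k.1 ∪ (SS (k.1 + 1) \ SS k.1) = SS (k.1 + 1) :=
        Finset.union_sdiff_of_subset (hmono k.1 (k.1 + 1) (by omega) k.2)
      rw [hσ0 k] at h1
      rw [← h1, Finset.union_comm, ← Finset.insert_eq]
    have hσinj : Function.Injective σ0 := by
      intro k l h
      by_contra hne
      have hwlog : ∀ a b : Fin M', a.1 < b.1 → σ0 a = σ0 b → False := by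
        intro a b hab hei
        have h1 : σ0 a ∈ SS b.1 :=
          hmono (a.1 + 1) b.1 (by omega) (le_of_lt b.2) (hmemS a).1
        rw [hei] at h1
        exact (hmemS b).2 h1
      rcases lt_trichotomy k.1 l.1 with hlt | heq | hgt
      · exact hwlog k l hlt h
      · exact hne (Fin.ext heq)
      · exact hwlog l k hgt h.symm
    have hσbij : Function.Bijective σ0 := Finite.injective_iff_bijective.mp hσinj
    set σ : Equiv.Perm (Fin M') := Equiv.ofBijective σ0 hσbij with hσdef
    have hσap : ∀ k : Fin M', σ k = σ0 k := fun k => rfl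
    have hCSS : ∀ k : ℕ, k ≤ M' → Cc σ k = SS k := by
      intro k
      induction k with
      | zero =>
        intro _
        rw [hCc, hSS0eq]
        simp
      | succ n ih =>
        intro hn1
        have hn : n ≤ M' := by omega
        have hnM : n < M' := by omega
        set nf : Fin M' := ⟨n, hnM⟩ with hnf
        have hfilter : (Finset.univ.filter fun l : Fin M' => (l : ℕ) < n + 1)
            = insert nf (Finset.univ.filter fun l : Fin M' => (l : ℕ) < n) := by
          ext l
          simp only [Finset.mem_filter, Finset.mem_univ, true_and, Finset.mem_insert]
          constructor
          · intro hl
            rcases Nat.lt_succ_iff_lt_or_eq.mp hl with h | h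
            · exact Or.inr h
            · exact Or.inl (Fin.ext h)
          · intro hl
            rcases hl with h | h
            · have : (l : ℕ) = n := congrArg Fin.val h
              omega
            · omega
        have : Cc σ (n + 1) = insert (σ nf) (Cc σ n) := by
          rw [hCc]
          dsimp only
          rw [hfilter, Finset.image_insert]
        rw [this, ih hn, hσap nf]
        exact (hins nf).symm
    refine ⟨σ, funext fun i => ?_⟩
    have hk : (σ.symm i : ℕ) < M' := (σ.symm i).2
    have h1 : F σ i = fF p' q (SS ((σ.symm i : ℕ) + 1)) - fF p' q (SS (σ.symm i : ℕ)) := by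
      rw [hF]
      dsimp only
      rw [hCSS ((σ.symm i : ℕ) + 1) hk, hCSS (σ.symm i : ℕ) (le_of_lt hk)]
    rw [h1, hact _ hk, hact _ (le_of_lt hk), hins (σ.symm i),
      Finset.sum_insert (hmemS (σ.symm i)).2]
    have : σ0 (σ.symm i) = i := by
      rw [← hσap (σ.symm i)]
      exact σ.apply_symm_apply i
    rw [this]
    ring
  have hsub : {R : Fin M' → ℝ | memBstar p' q R ∧
      M' ≤ (Finset.univ.filter (fun I : Finset (Fin M') => I.Nonempty ∧
        fF p' q I = ∑ i ∈ I, R i)).card} ⊆ Set.range F :=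
    fun R hR => hrange R hR.1 hR.2
  constructor
  · exact Set.Finite.subset (Set.finite_range F) hsub
  · refine le_trans (Set.ncard_le_ncard hsub (Set.finite_range F)) ?_
    rw [← Set.image_univ]
    refine le_trans (Set.ncard_image_le Set.finite_univ) ?_
    rw [Set.ncard_univ, Nat.card_eq_fintype_card, Fintype.card_perm, Fintype.card_fin]
end
end

section
/- Let X̄ = (X_1,…,X_M), W̄ = (W_1,…,W_K) and S be random variables over finite alphabets with an arbitrary joint pmf p(x̄,w̄,s), let J ⊆ {1,…,M}, and let Z̄ = (Z_1,…,Z_{M+K}) be random variables such that Z_m = X_m almost surely for m ∈ J, and such that conditionally on (X̄,W̄,S) the remaining variables {Z_m : m ∈ {1,…,M}\J} ∪ {Z_{M+j} : j ∈ {1,…,K}} are mutually independent with Z_m distributed according to a conditional pmf q_m(·|X_m) for m ∈ {1,…,M}\J and Z_{M+j} distributed according to a conditional pmf r_j(·|W_j) for j ∈ {1,…,K}. Then for every nonempty I ⊆ {1,…,M}, written as I = I' ∪ I'' with I' = I∩J ⊆ J and I'' = I\J ⊆ J^c: I(X̄_I;Z̄_I|Z̄_{{1,…,M+K}\I},S)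 = H(X̄_{I'}|X̄_{J\I'},Z̄_{{1,…,M+K}\(J∪I'')},S) + I(X̄_{I''};Z̄_{I''}|X̄_J,Z̄_{{1,…,M+K}\(J∪I'')},S). -/
open Finset
open scoped Classical

noncomputable section

lemma dist_eq_supp {Ω α : Type*} [Fintype Ω] [Fintype α] (P : Ω → ℝ) (X : Ω → α) (a : α) :
    _root_.dist P X a = ∑ ω ∈ (univ.filter fun ω => P ω ≠ 0).filter (fun ω => X ω = a), P ω := by
  classical
  show (∑ ω, if X ω = a then P ω else 0) = _
  rw [Finset.filter_filter, ← Finset.sum_filter]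
  refine (Finset.sum_subset ?_ ?_).symm
  · intro ω hω
    have := (Finset.mem_filter.1 hω).2.2
    simp [this]
  · intro ω hω hω'
    have h1 : X ω = a := (Finset.mem_filter.1 hω).2
    by_contra hne
    exact hω' (Finset.mem_filter.2 ⟨Finset.mem_univ _, hne, h1⟩)

lemma Hent_congr {Ω α β : Type*} [Fintype Ω] [Fintype α] [Fintype β]
    (P : Ω → ℝ) (X : Ω → α) (Y : Ω → β)
    (h : ∀ ω ω', P ω ≠ 0 → P ω' ≠ 0 → (X ω = X ω' ↔ Y ω = Y ω')) :
    Hent P X = Hent P Y := by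
  classical
  set supp := univ.filter fun ω : Ω => P ω ≠ 0 with hsupp
  have hmem : ∀ ω : Ω, ω ∈ supp ↔ P ω ≠ 0 := by
    intro ω; simp [hsupp]
  have hdist : ∀ ω₀ ∈ supp, _root_.dist P X (X ω₀) = _root_.dist P Y (Y ω₀) := by
    intro ω₀ h₀
    rw [dist_eq_supp, dist_eq_supp]
    apply Finset.sum_congr _ (fun _ _ => rfl)
    apply Finset.filter_congr
    intro ω hω
    exact h ω ω₀ ((hmem ω).1 hω) ((hmem ω₀).1 h₀)
  have hzeroX : ∀ a : α, a ∉ supp.image X → _root_.dist P X a = 0 := by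
    intro a ha
    rw [dist_eq_supp]
    apply Finset.sum_eq_zero
    intro ω hω
    exact absurd (Finset.mem_image.2 ⟨ω, (Finset.mem_filter.1 hω).1, (Finset.mem_filter.1 hω).2⟩) ha
  have hzeroY : ∀ b : β, b ∉ supp.image Y → _root_.dist P Y b = 0 := by
    intro b hb
    rw [dist_eq_supp]
    apply Finset.sum_eq_zero
    intro ω hω
    exact absurd (Finset.mem_image.2 ⟨ω, (Finset.mem_filter.1 hω).1, (Finset.mem_filter.1 hω).2⟩) hb
  rw [Hent, Hent]
  congr 1
  rw [show (∑ a, _root_.dist P X a * Real.logb 2 (_root_.dist P X a))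
      = ∑ a ∈ supp.image X, _root_.dist P X a * Real.logb 2 (_root_.dist P X a) from
    (Finset.sum_subset (Finset.subset_univ _) (fun a _ ha => by rw [hzeroX a ha, zero_mul])).symm]
  rw [show (∑ b, _root_.dist P Y b * Real.logb 2 (_root_.dist P Y b))
      = ∑ b ∈ supp.image Y, _root_.dist P Y b * Real.logb 2 (_root_.dist P Y b) from
    (Finset.sum_subset (Finset.subset_univ _) (fun b _ hb => by rw [hzeroY b hb, zero_mul])).symm]
  refine Finset.sum_bij (fun a ha => Y ((Finset.mem_image.1 ha).choose)) ?_ ?_ ?_ ?_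
  · intro a ha
    exact Finset.mem_image.2 ⟨_, (Finset.mem_image.1 ha).choose_spec.1, rfl⟩
  · intro a ha a' ha' hYeq
    obtain ⟨hω, hXa⟩ := (Finset.mem_image.1 ha).choose_spec
    obtain ⟨hω', hXa'⟩ := (Finset.mem_image.1 ha').choose_spec
    have := (h _ _ ((hmem _).1 hω) ((hmem _).1 hω')).2 hYeq
    rw [hXa, hXa'] at this; exact this
  · intro b hb
    obtain ⟨ω, hω, hYb⟩ := Finset.mem_image.1 hb
    have haX : X ω ∈ supp.image X := Finset.mem_image.2 ⟨ω, hω, rfl⟩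
    refine ⟨X ω, haX, ?_⟩
    obtain ⟨hω₁, hX₁⟩ := (Finset.mem_image.1 haX).choose_spec
    have := (h _ _ ((hmem _).1 hω₁) ((hmem _).1 hω)).1 hX₁
    show Y (Finset.mem_image.1 haX).choose = b
    rw [this, hYb]
  · intro a ha
    obtain ⟨hω₁, hX₁⟩ := (Finset.mem_image.1 ha).choose_spec
    show _root_.dist P X a * Real.logb 2 (_root_.dist P X a)
      = _root_.dist P Y (Y (Finset.mem_image.1 ha).choose)
        * Real.logb 2 (_root_.dist P Y (Y (Finset.mem_image.1 ha).choose))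
    have hd := hdist _ hω₁
    rw [hX₁] at hd
    rw [hd]
/-- The identity of Appendix A of the paper (equivalence of forms (3.1) and (3.5) of the
rate constraints of problem `TPC`). The encoded variables are indexed by
`Fin M ⊕ Fin K` (`Sum.inl m` for the `X`-encoders, `Sum.inr j` for the `W`-encoders);
`Z_m = X_m` for `m ∈ J`, and conditionally on `(X̄,W̄,S)` the remaining `Z`'s are mutually
independent with `Z_m ~ q_m(·|X_m)` for `m ∉ J` and `Z_{M+j} ~ r_j(·|W_j)`.  For every
nonempty `I ⊆ {1,…,M}` with `I' = I ∩ J` and `I'' = I \ J`: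
`I(X̄_I; Z̄_I | Z̄_{{1,…,M+K}\I}, S)
  = H(X̄_{I'} | X̄_{J\I'}, Z̄_{{1,…,M+K}\(J∪I'')}, S)
    + I(X̄_{I''}; Z̄_{I''} | X̄_J, Z̄_{{1,…,M+K}\(J∪I'')}, S)`. -/
theorem statement_13 (M K : ℕ) (𝒳 : Fin M → Type) (𝒲 : Fin K → Type) (𝒮 : Type)
    (𝒵 : Fin M ⊕ Fin K → Type)
    [∀ m, Fintype (𝒳 m)] [∀ k, Fintype (𝒲 k)] [Fintype 𝒮] [∀ i, Fintype (𝒵 i)]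
    (J : Finset (Fin M))
    (h𝒵 : ∀ m ∈ J, 𝒵 (Sum.inl m) = 𝒳 m)
    (p : (∀ m, 𝒳 m) × (∀ k, 𝒲 k) × 𝒮 → ℝ)
    (hp0 : ∀ xws, 0 ≤ p xws) (hp1 : ∑ xws, p xws = 1)
    (q : ∀ m : Fin M, 𝒳 m → 𝒵 (Sum.inl m) → ℝ)
    (r : ∀ k : Fin K, 𝒲 k → 𝒵 (Sum.inr k) → ℝ)
    (hq0 : ∀ m x z, 0 ≤ q m x z) (hq1 : ∀ m, m ∉ J → ∀ x, ∑ z, q m x z = 1)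
    (hr0 : ∀ k w z, 0 ≤ r k w z) (hr1 : ∀ k w, ∑ z, r k w z = 1)
    (P : ((∀ m, 𝒳 m) × (∀ k, 𝒲 k) × 𝒮 × (∀ i, 𝒵 i)) → ℝ)
    (hP : ∀ x w s z, P (x, w, s, z) =
      p (x, w, s) * (∏ m ∈ Jᶜ, q m (x m) (z (Sum.inl m)))
        * (∏ k, r k (w k) (z (Sum.inr k)))
        * (∏ m ∈ J, if HEq (z (Sum.inl m)) (x m) then (1 : ℝ) else 0))
    (I I' I'' : Finset (Fin M)) (hI : I.Nonempty)
    (hI' : I' = I ∩ J) (hI'' : I'' = I \ J) :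
    condMI P
        (fun ω (i : I) => ω.1 i.1)
        (fun ω (i : (I.image Sum.inl : Finset (Fin M ⊕ Fin K))) => ω.2.2.2 i.1)
        (fun ω =>
          ((fun i : ((I.image Sum.inl)ᶜ : Finset (Fin M ⊕ Fin K)) => ω.2.2.2 i.1),
            ω.2.2.1))
      = condEnt P
          (fun ω (i : I') => ω.1 i.1)
          (fun ω =>
            ((fun i : (J \ I' : Finset (Fin M)) => ω.1 i.1),
              (fun i : (((J ∪ I'').image Sum.inl)ᶜ : Finset (Fin M ⊕ Fin K)) =>
                ω.2.2.2 i.1),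
              ω.2.2.1))
        + condMI P
            (fun ω (i : I'') => ω.1 i.1)
            (fun ω (i : (I''.image Sum.inl : Finset (Fin M ⊕ Fin K))) => ω.2.2.2 i.1)
            (fun ω =>
              ((fun i : J => ω.1 i.1),
                (fun i : (((J ∪ I'').image Sum.inl)ᶜ : Finset (Fin M ⊕ Fin K)) =>
                  ω.2.2.2 i.1),
                ω.2.2.1)) := by
  classical
  subst hI' hI''
  -- the almost-sure identification Z_m = X_m for m ∈ J, at the level of supports
  have hzx : ∀ (ω ω' : (∀ m, 𝒳 m) × (∀ k, 𝒲 k) × 𝒮 × (∀ i, 𝒵 i)),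
      P ω ≠ 0 → P ω' ≠ 0 → ∀ m ∈ J,
      (ω.2.2.2 (Sum.inl m) = ω'.2.2.2 (Sum.inl m) ↔ ω.1 m = ω'.1 m) := by
    have hXZ : ∀ (ω : (∀ m, 𝒳 m) × (∀ k, 𝒲 k) × 𝒮 × (∀ i, 𝒵 i)), P ω ≠ 0 →
        ∀ m ∈ J, HEq (ω.2.2.2 (Sum.inl m)) (ω.1 m) := by
      rintro ⟨x, w, s, z⟩ hne m hm
      rw [hP] at hne
      by_contra hcon
      apply hne
      rw [Finset.prod_eq_zero hm (by simp [hcon]), mul_zero]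
    intro ω ω' hω hω' m hm
    have h1 := hXZ ω hω m hm
    have h2 := hXZ ω' hω' m hm
    constructor
    · intro hz
      exact eq_of_heq (h1.symm.trans ((heq_of_eq hz).trans h2))
    · intro hx
      exact eq_of_heq (h1.trans ((heq_of_eq hx).trans h2.symm))
  -- membership helpers
  have hmc : ∀ (A : Finset (Fin M)) (m : Fin M),
      Sum.inl m ∈ ((A.image Sum.inl)ᶜ : Finset (Fin M ⊕ Fin K)) ↔ m ∉ A := by
    intro A m; simp
  have hrc : ∀ (A : Finset (Fin M)) (k : Fin K),
      Sum.inr k ∈ ((A.image Sum.inl)ᶜ : Finset (Fin M ⊕ Fin K)) := by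
    intro A k; simp
  have hml : ∀ (A : Finset (Fin M)) (m : Fin M),
      Sum.inl m ∈ (A.image Sum.inl : Finset (Fin M ⊕ Fin K)) ↔ m ∈ A := by
    intro A m; simp
  have hrl : ∀ (A : Finset (Fin M)) (k : Fin K),
      Sum.inr k ∉ (A.image Sum.inl : Finset (Fin M ⊕ Fin K)) := by
    intro A k; simp
  have hnR : ∀ m : Fin M, m ∉ J → m ∉ I → m ∉ J ∪ I \ J := by
    intro m hmJ hmI h
    rcases Finset.mem_union.1 h with h | h
    · exact hmJ h
    · exact hmI (Finset.mem_sdiff.1 h).1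
  simp only [condMI, condEnt]
  have e1 : Hent P (fun ω => ((fun i : I => ω.1 i.1),
        ((fun i : ((I.image Sum.inl)ᶜ : Finset (Fin M ⊕ Fin K)) => ω.2.2.2 i.1), ω.2.2.1)))
      = Hent P (fun ω => ((fun i : (I \ J : Finset (Fin M)) => ω.1 i.1),
        ((fun i : J => ω.1 i.1),
         (fun i : (((J ∪ I \ J).image Sum.inl)ᶜ : Finset (Fin M ⊕ Fin K)) => ω.2.2.2 i.1),
         ω.2.2.1))) := by
    apply Hent_congr
    intro ω ω' hω hω'
    simp only [Prod.mk.injEq, funext_iff, Subtype.forall]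
    constructor
    · rintro ⟨hX, hZ, hS⟩
      refine ⟨fun m hm => hX m (Finset.mem_sdiff.1 hm).1, fun m hm => ?_, fun i hi => ?_, hS⟩
      · by_cases hmi : m ∈ I
        · exact hX m hmi
        · exact (hzx ω ω' hω hω' m hm).1 (hZ _ ((hmc I m).2 hmi))
      · rcases i with m | k
        · have h0 : m ∉ J ∪ I \ J := (hmc _ m).1 hi
          refine hZ _ ((hmc I m).2 ?_)
          intro hmI
          by_cases hmJ : m ∈ J
          · exact h0 (Finset.mem_union.2 (Or.inl hmJ))
          · exact h0 (Finset.mem_union.2 (Or.inr (Finset.mem_sdiff.2 ⟨hmI, hmJ⟩)))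
        · exact hZ _ (hrc I k)
    · rintro ⟨hX2, hXJ, hZ, hS⟩
      refine ⟨fun m hm => ?_, fun i hi => ?_, hS⟩
      · by_cases hmJ : m ∈ J
        · exact hXJ m hmJ
        · exact hX2 m (Finset.mem_sdiff.2 ⟨hm, hmJ⟩)
      · rcases i with m | k
        · have hmI : m ∉ I := (hmc I m).1 hi
          by_cases hmJ : m ∈ J
          · exact (hzx ω ω' hω hω' m hmJ).2 (hXJ m hmJ)
          · exact hZ _ ((hmc _ m).2 (hnR m hmJ hmI))
        · exact hZ _ (hrc _ k)
  have e2 : Hent P (fun ω => ((fun i : (I.image Sum.inl : Finset (Fin M ⊕ Fin K)) => ω.2.2.2 i.1),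
        ((fun i : ((I.image Sum.inl)ᶜ : Finset (Fin M ⊕ Fin K)) => ω.2.2.2 i.1), ω.2.2.1)))
      = Hent P (fun ω => ((fun i : ((I \ J).image Sum.inl : Finset (Fin M ⊕ Fin K)) => ω.2.2.2 i.1),
        ((fun i : J => ω.1 i.1),
         (fun i : (((J ∪ I \ J).image Sum.inl)ᶜ : Finset (Fin M ⊕ Fin K)) => ω.2.2.2 i.1),
         ω.2.2.1))) := by
    apply Hent_congr
    intro ω ω' hω hω'
    simp only [Prod.mk.injEq, funext_iff, Subtype.forall]
    constructor
    · rintro ⟨hZI, hZc, hS⟩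
      have hall : ∀ i₀ : Fin M ⊕ Fin K, ω.2.2.2 i₀ = ω'.2.2.2 i₀ := by
        intro i₀
        by_cases h : i₀ ∈ (I.image Sum.inl : Finset (Fin M ⊕ Fin K))
        · exact hZI _ h
        · exact hZc _ (Finset.mem_compl.2 h)
      exact ⟨fun i hi => hall i, fun m hm => (hzx ω ω' hω hω' m hm).1 (hall _),
        fun i hi => hall i, hS⟩
    · rintro ⟨hZI'', hXJ, hZR, hS⟩
      have hall : ∀ i₀ : Fin M ⊕ Fin K, ω.2.2.2 i₀ = ω'.2.2.2 i₀ := by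
        rintro (m | k)
        · by_cases hmJ : m ∈ J
          · exact (hzx ω ω' hω hω' m hmJ).2 (hXJ m hmJ)
          · by_cases hmI : m ∈ I
            · exact hZI'' _ ((hml _ m).2 (Finset.mem_sdiff.2 ⟨hmI, hmJ⟩))
            · exact hZR _ ((hmc _ m).2 (hnR m hmJ hmI))
        · exact hZR _ (hrc _ k)
      exact ⟨fun i hi => hall i, fun i hi => hall i, hS⟩
  have e3 : Hent P (fun ω => ((fun i : I => ω.1 i.1),
        ((fun i : (I.image Sum.inl : Finset (Fin M ⊕ Fin K)) => ω.2.2.2 i.1),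
         ((fun i : ((I.image Sum.inl)ᶜ : Finset (Fin M ⊕ Fin K)) => ω.2.2.2 i.1), ω.2.2.1))))
      = Hent P (fun ω => ((fun i : (I \ J : Finset (Fin M)) => ω.1 i.1),
        ((fun i : ((I \ J).image Sum.inl : Finset (Fin M ⊕ Fin K)) => ω.2.2.2 i.1),
         ((fun i : J => ω.1 i.1),
          (fun i : (((J ∪ I \ J).image Sum.inl)ᶜ : Finset (Fin M ⊕ Fin K)) => ω.2.2.2 i.1),
          ω.2.2.1)))) := by
    apply Hent_congr
    intro ω ω' hω hω'
    simp only [Prod.mk.injEq, funext_iff, Subtype.forall]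
    constructor
    · rintro ⟨hX, hZI, hZc, hS⟩
      refine ⟨fun m hm => hX m (Finset.mem_sdiff.1 hm).1, fun i hi => ?_, fun m hm => ?_,
        fun i hi => ?_, hS⟩
      · rcases i with m | k
        · exact hZI _ ((hml I m).2 (Finset.mem_sdiff.1 ((hml _ m).1 hi)).1)
        · exact absurd hi (hrl _ k)
      · by_cases hmi : m ∈ I
        · exact hX m hmi
        · exact (hzx ω ω' hω hω' m hm).1 (hZc _ ((hmc I m).2 hmi))
      · rcases i with m | k
        · have h0 : m ∉ J ∪ I \ J := (hmc _ m).1 hi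
          refine hZc _ ((hmc I m).2 ?_)
          intro hmI
          by_cases hmJ : m ∈ J
          · exact h0 (Finset.mem_union.2 (Or.inl hmJ))
          · exact h0 (Finset.mem_union.2 (Or.inr (Finset.mem_sdiff.2 ⟨hmI, hmJ⟩)))
        · exact hZc _ (hrc I k)
    · rintro ⟨hX2, hZ2, hXJ, hZR, hS⟩
      refine ⟨fun m hm => ?_, fun i hi => ?_, fun i hi => ?_, hS⟩
      · by_cases hmJ : m ∈ J
        · exact hXJ m hmJ
        · exact hX2 m (Finset.mem_sdiff.2 ⟨hm, hmJ⟩)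
      · rcases i with m | k
        · have hmI : m ∈ I := (hml I m).1 hi
          by_cases hmJ : m ∈ J
          · exact (hzx ω ω' hω hω' m hmJ).2 (hXJ m hmJ)
          · exact hZ2 _ ((hml _ m).2 (Finset.mem_sdiff.2 ⟨hmI, hmJ⟩))
        · exact absurd hi (hrl _ k)
      · rcases i with m | k
        · have hmI : m ∉ I := (hmc I m).1 hi
          by_cases hmJ : m ∈ J
          · exact (hzx ω ω' hω hω' m hmJ).2 (hXJ m hmJ)
          · exact hZR _ ((hmc _ m).2 (hnR m hmJ hmI))
        · exact hZR _ (hrc _ k)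
  have e4 : Hent P (fun ω =>
        ((fun i : ((I.image Sum.inl)ᶜ : Finset (Fin M ⊕ Fin K)) => ω.2.2.2 i.1), ω.2.2.1))
      = Hent P (fun ω => ((fun i : (J \ (I ∩ J) : Finset (Fin M)) => ω.1 i.1),
        (fun i : (((J ∪ I \ J).image Sum.inl)ᶜ : Finset (Fin M ⊕ Fin K)) => ω.2.2.2 i.1),
        ω.2.2.1)) := by
    apply Hent_congr
    intro ω ω' hω hω'
    simp only [Prod.mk.injEq, funext_iff, Subtype.forall]
    constructor
    · rintro ⟨hZc, hS⟩
      refine ⟨fun m hm => ?_, fun i hi => ?_, hS⟩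
      · obtain ⟨hmJ, hmn⟩ := Finset.mem_sdiff.1 hm
        have hmI : m ∉ I := fun h => hmn (Finset.mem_inter.2 ⟨h, hmJ⟩)
        exact (hzx ω ω' hω hω' m hmJ).1 (hZc _ ((hmc I m).2 hmI))
      · rcases i with m | k
        · have h0 : m ∉ J ∪ I \ J := (hmc _ m).1 hi
          refine hZc _ ((hmc I m).2 ?_)
          intro hmI
          by_cases hmJ : m ∈ J
          · exact h0 (Finset.mem_union.2 (Or.inl hmJ))
          · exact h0 (Finset.mem_union.2 (Or.inr (Finset.mem_sdiff.2 ⟨hmI, hmJ⟩)))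
        · exact hZc _ (hrc I k)
    · rintro ⟨hXd, hZR, hS⟩
      refine ⟨fun i hi => ?_, hS⟩
      rcases i with m | k
      · have hmI : m ∉ I := (hmc I m).1 hi
        by_cases hmJ : m ∈ J
        · refine (hzx ω ω' hω hω' m hmJ).2 (hXd m (Finset.mem_sdiff.2 ⟨hmJ, ?_⟩))
          intro h
          exact hmI (Finset.mem_inter.1 h).1
        · exact hZR _ ((hmc _ m).2 (hnR m hmJ hmI))
      · exact hZR _ (hrc _ k)
  have e5 : Hent P (fun ω => ((fun i : (I ∩ J : Finset (Fin M)) => ω.1 i.1),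
        ((fun i : (J \ (I ∩ J) : Finset (Fin M)) => ω.1 i.1),
         (fun i : (((J ∪ I \ J).image Sum.inl)ᶜ : Finset (Fin M ⊕ Fin K)) => ω.2.2.2 i.1),
         ω.2.2.1)))
      = Hent P (fun ω => ((fun i : J => ω.1 i.1),
        (fun i : (((J ∪ I \ J).image Sum.inl)ᶜ : Finset (Fin M ⊕ Fin K)) => ω.2.2.2 i.1),
        ω.2.2.1)) := by
    apply Hent_congr
    intro ω ω' hω hω'
    simp only [Prod.mk.injEq, funext_iff, Subtype.forall]
    constructor
    · rintro ⟨hX1, hX2, hZ, hS⟩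
      refine ⟨fun m hm => ?_, hZ, hS⟩
      by_cases hmI : m ∈ I
      · exact hX1 m (Finset.mem_inter.2 ⟨hmI, hm⟩)
      · exact hX2 m (Finset.mem_sdiff.2 ⟨hm, fun h => hmI (Finset.mem_inter.1 h).1⟩)
    · rintro ⟨hXJ, hZ, hS⟩
      exact ⟨fun m hm => hXJ m (Finset.mem_inter.1 hm).2,
        fun m hm => hXJ m (Finset.mem_sdiff.1 hm).1, hZ, hS⟩
  rw [e1, e2, e3, e4, e5]
  ring
end
end
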